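/- arXiv:2409.01981 — 7 statements merged into one kernel-verified Lean document; each statement's English description precedes it below -/
import Mathlib

section
/- Fix a positive integer n. The following are equivalent: (i) every functional tree map g : ℤ_n → ℤ_n admits a β⃗-labeling; (ii) for every functional tree map g : ℤ_n → ℤ_n, if the canonical representative of the polynomial certificate of g^{(2)} (the second iterate of g) is not the zero polynomial, then the canonical representative of the polynomial certificate of g is not the zero polynomial. -/
open MvPolynomial

/-- `g : Fin n → Fin n` is a functional tree map if the image of `Fin n` under the
`(n-1)`-fold iterate of `g` is a singleton. -/
def IsFunctionalTreeMap (n : ℕ) (g : Fin n → Fin n) : Prop :=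
  ∃ r : Fin n, ∀ v : Fin n, g^[n - 1] v = r

/-- The distance from `v` to the root of the functional tree prescribed by `g`. -/
noncomputable def treeDist (n : ℕ) (g : Fin n → Fin n) (v : Fin n) : ℕ :=
  sInf {k : ℕ | g^[k] v = g^[n - 1] v}

/-- `σ` witnesses a β⃗-labeling of `g`. -/
def IsBetaLabeling (n : ℕ) (g : Fin n → Fin n) (σ : Equiv.Perm (Fin n)) : Prop :=
  (Set.range fun v : Fin n =>
      ((-1 : ℤ) ^ treeDist n (⇑σ ∘ g ∘ ⇑σ.symm) v) *
        (((σ (g (σ.symm v)) : ℕ) : ℤ) - ((v : ℕ) : ℤ)))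
    = Set.Ico (0 : ℤ) (n : ℤ)

/-- The edge label binomial `(-1)^{d_g(v)} (x_{g(v)} - x_v)`. -/
noncomputable def edgeBinom (n : ℕ) (g : Fin n → Fin n) (v : Fin n) :
    MvPolynomial (Fin n) ℚ :=
  (-1 : MvPolynomial (Fin n) ℚ) ^ treeDist n g v * (X (g v) - X v)

/-- The polynomial certificate of decomposition `P_g = V ⬝ E_g ⬝ N_g`. -/
noncomputable def certP (n : ℕ) (g : Fin n → Fin n) : MvPolynomial (Fin n) ℚ :=
  (∏ v : Fin n, ∏ u ∈ Finset.Iio v, (X v - X u)) *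
    (∏ v : Fin n, ∏ u ∈ Finset.Iio v, (edgeBinom n g v - edgeBinom n g u)) *
    (∏ v : Fin n, ∏ i ∈ Finset.Ioo 0 n, (edgeBinom n g v + C (i : ℚ)))

/-- The Lagrange basis polynomial `L_f`. -/
noncomputable def lagrangeBasis (n : ℕ) (f : Fin n → Fin n) : MvPolynomial (Fin n) ℚ :=
  ∏ i : Fin n, ∏ j ∈ Finset.univ.erase (f i),
    C ((((f i : ℕ) : ℚ) - ((j : ℕ) : ℚ))⁻¹) * (X i - C ((j : ℕ) : ℚ))

/-- The canonical representative of `H` modulo `{(x_i)^{n̲} : i}`, obtained by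
Lagrange interpolation over the lattice `(Fin n)^n`. -/
noncomputable def canonRep (n : ℕ) (H : MvPolynomial (Fin n) ℚ) :
    MvPolynomial (Fin n) ℚ :=
  ∑ f : Fin n → Fin n,
    C (eval (fun i : Fin n => ((f i : ℕ) : ℚ)) H) * lagrangeBasis n f

/-!
Evaluate the certificate `P_g` at the lattice point given by a vertex labeling `h`. The factor
`V` survives iff `h` is injective, i.e. a permutation `σ`; `E_g` then survives iff the edge labels
`(-1)^{d_g(v)} (σ(g v) - σ v)` are distinct, and `N_g` iff none of them lies in `{-1, …, -(n-1)}`.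
Since every label lies in `(-n, n)`, this says exactly that the labels are `0, …, n-1`, so
`P_g` is nonzero somewhere on the lattice iff `g` has a β⃗-labeling, and the canonical
representative vanishes iff `P_g` vanishes on the whole lattice.

Condition (ii) thus says that a β⃗-labeling of `g ∘ g` yields one of `g`. Iterating, it suffices
to label `g^[2^n]`, which is the constant map onto the root; any `σ` sending the root to `0`
labels a constant map.
-/

section CanonicalRepresentative

variable {n : ℕ}

theorem eval_lagrangeBasis (f h : Fin n → Fin n) :
    eval (fun i => ((h i : ℕ) : ℚ)) (lagrangeBasis n f) = if h = f then 1 else 0 := by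
  simp only [lagrangeBasis, map_prod, map_mul, eval_C, eval_sub, eval_X]
  split_ifs with hf
  · subst hf
    refine Finset.prod_eq_one fun i _ => Finset.prod_eq_one fun j hj => ?_
    have hne : ((h i : ℕ) : ℚ) - ((j : ℕ) : ℚ) ≠ 0 := by
      simpa [sub_eq_zero, Fin.val_eq_val] using (Finset.ne_of_mem_erase hj).symm
    exact inv_mul_cancel₀ hne
  · obtain ⟨i, hi⟩ := Function.ne_iff.mp hf
    exact Finset.prod_eq_zero (Finset.mem_univ i) <|
      Finset.prod_eq_zero (Finset.mem_erase.mpr ⟨hi, Finset.mem_univ _⟩) (by simp)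

theorem eval_canonRep (H : MvPolynomial (Fin n) ℚ) (h : Fin n → Fin n) :
    eval (fun i => ((h i : ℕ) : ℚ)) (canonRep n H) = eval (fun i => ((h i : ℕ) : ℚ)) H := by
  simp [canonRep, eval_lagrangeBasis]

theorem canonRep_ne_zero_iff (H : MvPolynomial (Fin n) ℚ) :
    canonRep n H ≠ 0 ↔ ∃ h : Fin n → Fin n, eval (fun i => ((h i : ℕ) : ℚ)) H ≠ 0 := by
  refine ⟨fun hH => ?_, fun ⟨h, hh⟩ hH => hh (by rw [← eval_canonRep, hH, map_zero])⟩
  by_contra! hzero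
  exact hH (Finset.sum_eq_zero fun f _ => by rw [hzero f, map_zero, zero_mul])

end CanonicalRepresentative

theorem prod_prod_Iio_sub_ne_zero_iff {ι R : Type*} [Fintype ι] [LinearOrder ι]
    [LocallyFiniteOrderBot ι] [CommRing R] [IsDomain R] (a : ι → R) :
    ∏ v, ∏ u ∈ Finset.Iio v, (a v - a u) ≠ 0 ↔ Function.Injective a := by
  simp only [Finset.prod_ne_zero_iff, Finset.mem_univ, Finset.mem_Iio, sub_ne_zero, forall_const]
  refine ⟨fun h x y hxy => ?_, fun h v u huv => h.ne huv.ne'⟩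
  by_contra hne
  rcases lt_or_gt_of_ne hne with hlt | hlt
  exacts [h y x hlt hxy.symm, h x y hlt hxy]

theorem nonneg_iff_forall_add_ne_zero_of_abs_lt {x : ℤ} {n : ℕ} (hx : |x| < n) :
    0 ≤ x ↔ ∀ i ∈ Finset.Ioo 0 n, x + (i : ℤ) ≠ 0 := by
  refine ⟨fun hx0 i hi => by have := (Finset.mem_Ioo.mp hi).1; omega, fun h => ?_⟩
  by_contra! hneg
  rw [abs_lt] at hx
  exact h (-x).toNat (Finset.mem_Ioo.mpr ⟨by omega, by omega⟩) (by omega)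

theorem range_eq_Ico_iff {n : ℕ} (ℓ : Fin n → ℤ) :
    Set.range ℓ = Set.Ico 0 (n : ℤ) ↔ Function.Injective ℓ ∧ ∀ v, 0 ≤ ℓ v ∧ ℓ v < n := by
  classical
  have hcard : (Finset.Ico 0 (n : ℤ)).card = (Finset.univ : Finset (Fin n)).card := by simp
  rw [← Set.image_univ, ← Finset.coe_univ, ← Finset.coe_image, ← Finset.coe_Ico,
    Finset.coe_inj]
  constructor
  · intro himage
    refine ⟨fun a b hab => ?_, fun v => ?_⟩
    · rw [← himage, Finset.card_image_iff] at hcard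
      exact hcard (Finset.mem_coe.mpr (Finset.mem_univ a)) (Finset.mem_univ b) hab
    · have hv := himage ▸ Finset.mem_image_of_mem ℓ (Finset.mem_univ v)
      simpa using hv
  · rintro ⟨hinj, hbound⟩
    refine Finset.eq_of_subset_of_card_le (fun x hx => ?_) ?_
    · obtain ⟨v, -, rfl⟩ := Finset.mem_image.mp hx
      exact Finset.mem_Ico.mpr (hbound v)
    · rw [Finset.card_image_of_injective _ hinj, hcard]

section EdgeLabels

variable {n : ℕ}

/-- With `h = σ`, `edgeLabel n g σ v` is the β⃗-label of `σ v` under `σ ∘ g ∘ σ⁻¹`. -/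
noncomputable def edgeLabel (n : ℕ) (g h : Fin n → Fin n) (v : Fin n) : ℤ :=
  (-1) ^ treeDist n g v * (((h (g v) : ℕ) : ℤ) - ((h v : ℕ) : ℤ))

theorem abs_edgeLabel_lt (g h : Fin n → Fin n) (v : Fin n) : |edgeLabel n g h v| < n := by
  rw [edgeLabel, abs_mul, abs_pow, abs_neg, abs_one, one_pow, one_mul, abs_sub_lt_iff]
  have := (h (g v)).isLt
  have := (h v).isLt
  omega

theorem eval_edgeBinom (g h : Fin n → Fin n) (v : Fin n) :
    eval (fun i => ((h i : ℕ) : ℚ)) (edgeBinom n g v) = edgeLabel n g h v := by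
  simp [edgeBinom, edgeLabel]

theorem eval_certP_ne_zero_iff (g h : Fin n → Fin n) :
    eval (fun i => ((h i : ℕ) : ℚ)) (certP n g) ≠ 0 ↔
      Function.Injective h ∧ Function.Injective (edgeLabel n g h) ∧
        ∀ v, ∀ i ∈ Finset.Ioo 0 n, edgeLabel n g h v + (i : ℤ) ≠ 0 := by
  simp only [certP, map_mul, map_prod, map_sub, map_add, eval_X, eval_C, eval_edgeBinom,
    mul_ne_zero_iff, and_assoc]
  have hcast_h : Function.Injective (fun i => ((h i : ℕ) : ℚ)) ↔ Function.Injective h :=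
    (Nat.cast_injective.comp Fin.val_injective).of_comp_iff h
  have hcast_ℓ : Function.Injective (fun v => ((edgeLabel n g h v : ℤ) : ℚ)) ↔
      Function.Injective (edgeLabel n g h) :=
    Int.cast_injective.of_comp_iff _
  rw [prod_prod_Iio_sub_ne_zero_iff (fun i => ((h i : ℕ) : ℚ)),
    prod_prod_Iio_sub_ne_zero_iff (fun v => ((edgeLabel n g h v : ℤ) : ℚ)), hcast_h, hcast_ℓ]
  simp only [Finset.prod_ne_zero_iff, Finset.mem_univ, forall_const]
  exact_mod_cast Iff.rfl

theorem treeDist_conj (g : Fin n → Fin n) (σ : Equiv.Perm (Fin n)) (w : Fin n) :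
    treeDist n (σ ∘ g ∘ σ.symm) (σ w) = treeDist n g w := by
  have hsemiconj : Function.Semiconj σ g (σ ∘ g ∘ σ.symm) := fun x => by simp
  simp only [treeDist, ← fun k => hsemiconj.iterate_right k w, σ.injective.eq_iff]

theorem isBetaLabeling_iff_range_edgeLabel (g : Fin n → Fin n) (σ : Equiv.Perm (Fin n)) :
    IsBetaLabeling n g σ ↔ Set.range (edgeLabel n g σ) = Set.Ico 0 (n : ℤ) := by
  rw [IsBetaLabeling, ← σ.surjective.range_comp]
  congr! 2
  funext w
  simp [edgeLabel, treeDist_conj]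

theorem isBetaLabeling_iff_eval_certP_ne_zero (g : Fin n → Fin n) (σ : Equiv.Perm (Fin n)) :
    IsBetaLabeling n g σ ↔ eval (fun i => ((σ i : ℕ) : ℚ)) (certP n g) ≠ 0 := by
  rw [isBetaLabeling_iff_range_edgeLabel, range_eq_Ico_iff, eval_certP_ne_zero_iff,
    and_iff_right σ.injective]
  refine and_congr_right' <| forall_congr' fun v => ?_
  have hbound := abs_edgeLabel_lt g σ v
  rw [← nonneg_iff_forall_add_ne_zero_of_abs_lt hbound, and_iff_left_iff_imp]
  exact fun _ => (abs_lt.mp hbound).2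

theorem exists_isBetaLabeling_iff_canonRep_certP_ne_zero (g : Fin n → Fin n) :
    (∃ σ, IsBetaLabeling n g σ) ↔ canonRep n (certP n g) ≠ 0 := by
  rw [canonRep_ne_zero_iff]
  refine ⟨fun ⟨σ, hσ⟩ => ⟨σ, (isBetaLabeling_iff_eval_certP_ne_zero g σ).mp hσ⟩,
    fun ⟨h, hh⟩ => ?_⟩
  have hbij := Finite.injective_iff_bijective.mp ((eval_certP_ne_zero_iff g h).mp hh).1
  exact ⟨Equiv.ofBijective h hbij, (isBetaLabeling_iff_eval_certP_ne_zero g _).mpr hh⟩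

theorem treeDist_const_of_ne {r v : Fin n} (hv : v ≠ r) : treeDist n (fun _ => r) v = 1 := by
  have hn : 1 ≤ n - 1 := by have := r.isLt; have := v.isLt; omega
  have hiterate : ∀ k, 1 ≤ k → (fun _ : Fin n => r)^[k] v = r := fun k hk => by
    obtain ⟨k, rfl⟩ := Nat.exists_eq_add_of_le' hk
    rw [Function.iterate_succ_apply]
    exact Function.iterate_fixed rfl k
  have hmem : 1 ∈ {k | (fun _ : Fin n => r)^[k] v = (fun _ => r)^[n - 1] v} := by
    simp only [Set.mem_ofPred_eq, hiterate 1 le_rfl, hiterate _ hn]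
  have hzero : 0 ∉ {k | (fun _ : Fin n => r)^[k] v = (fun _ => r)^[n - 1] v} := by
    simpa [hiterate _ hn] using hv
  refine le_antisymm (Nat.sInf_le hmem) (Nat.one_le_iff_ne_zero.mpr fun h => ?_)
  rcases Nat.sInf_eq_zero.mp h with h | h
  · exact hzero h
  · rw [h] at hmem
    exact hmem

theorem edgeLabel_const {r : Fin n} {h : Fin n → Fin n} (hr : (h r : ℕ) = 0) (v : Fin n) :
    edgeLabel n (fun _ => r) h v = h v := by
  by_cases hv : v = r
  · simp [edgeLabel, hv, hr]
  · simp [edgeLabel, treeDist_const_of_ne hv, hr]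

theorem exists_isBetaLabeling_const (r : Fin n) :
    ∃ σ, IsBetaLabeling n (fun _ => r) σ := by
  have hroot : ((Equiv.swap r ⟨0, r.pos⟩ r : Fin n) : ℕ) = 0 := by simp
  refine ⟨Equiv.swap r ⟨0, r.pos⟩, ?_⟩
  rw [isBetaLabeling_iff_range_edgeLabel, range_eq_Ico_iff, funext (edgeLabel_const hroot)]
  exact ⟨Nat.cast_injective.comp (Fin.val_injective.comp (Equiv.injective _)),
    fun v => ⟨Int.natCast_nonneg _, Int.ofNat_lt.mpr (Fin.isLt _)⟩⟩

end EdgeLabels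

namespace IsFunctionalTreeMap

variable {n : ℕ} {g : Fin n → Fin n}

theorem exists_iterate_eq_of_le (hg : IsFunctionalTreeMap n g) :
    ∃ r, ∀ m, n - 1 ≤ m → ∀ v, g^[m] v = r := by
  obtain ⟨r, hr⟩ := hg
  have hfixed : g r = r := by
    simpa only [← Function.iterate_succ_apply, Function.iterate_succ_apply', hr] using hr (g r)
  refine ⟨r, fun m hm v => ?_⟩
  obtain ⟨k, rfl⟩ := Nat.exists_eq_add_of_le' hm
  rw [Function.iterate_add_apply, hr, Function.iterate_fixed hfixed]

theorem comp_self (hg : IsFunctionalTreeMap n g) : IsFunctionalTreeMap n (g ∘ g) := by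
  obtain ⟨r, hr⟩ := hg.exists_iterate_eq_of_le
  refine ⟨r, fun v => ?_⟩
  rw [← Function.iterate_one g, ← Function.iterate_add, ← Function.iterate_mul]
  exact hr _ (by omega) v

theorem iterate_two_pow_eq_const (hg : IsFunctionalTreeMap n g) :
    ∃ r, g^[2 ^ n] = fun _ => r := by
  obtain ⟨r, hr⟩ := hg.exists_iterate_eq_of_le
  exact ⟨r, funext <| hr _ (by have := @Nat.lt_two_pow_self n; omega)⟩

end IsFunctionalTreeMap

theorem Function.of_iterate_two_pow {α : Type*} {C P : (α → α) → Prop}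
    (hC : ∀ g, C g → C (g ∘ g)) (hP : ∀ g, C g → P (g ∘ g) → P g) :
    ∀ (k : ℕ) {g}, C g → P g^[2 ^ k] → P g
  | 0, _, _, hg => hg
  | k + 1, g, hg, hk => by
    rw [pow_succ', Function.iterate_mul, Function.iterate_succ, Function.iterate_one] at hk
    exact hP g hg (Function.of_iterate_two_pow hC hP k (hC g hg) hk)

theorem beta_labeling_iff_composition_implication_general (n : ℕ) :
    (∀ g : Fin n → Fin n, IsFunctionalTreeMap n g →
        ∃ σ : Equiv.Perm (Fin n), IsBetaLabeling n g σ) ↔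
      (∀ g : Fin n → Fin n, IsFunctionalTreeMap n g →
        canonRep n (certP n (g ∘ g)) ≠ 0 → canonRep n (certP n g) ≠ 0) := by
  simp only [← exists_isBetaLabeling_iff_canonRep_certP_ne_zero]
  refine ⟨fun h g hg _ => h g hg, fun h g hg => ?_⟩
  obtain ⟨r, hr⟩ := hg.iterate_two_pow_eq_const
  refine Function.of_iterate_two_pow (P := fun f => ∃ σ, IsBetaLabeling n f σ)
    (fun _ => IsFunctionalTreeMap.comp_self) h n hg ?_
  rw [hr]
  exact exists_isBetaLabeling_const r

/-- Every functional tree map on `Fin n` admits a β⃗-labeling if and only if, for every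
functional tree map `g`, nonvanishing of the canonical representative of the certificate
of `g ∘ g` implies nonvanishing of the canonical representative of the certificate of
`g`. -/
theorem beta_labeling_iff_composition_implication (n : ℕ) (hn : 0 < n) :
    (∀ g : Fin n → Fin n, IsFunctionalTreeMap n g →
        ∃ σ : Equiv.Perm (Fin n), IsBetaLabeling n g σ) ↔
      (∀ g : Fin n → Fin n, IsFunctionalTreeMap n g →
        canonRep n (certP n (g ∘ g)) ≠ 0 → canonRep n (certP n g) ≠ 0) :=
  beta_labeling_iff_composition_implication_general n
end

section
/- (Multivariate quotient–remainder theorem with Lagrange interpolation.) Let m, n be positive integers. Every polynomial H ∈ ℚ[x_0,…,x_{m−1}] admits an expansion H = Σ_{ℓ∈ℤ_m} q_ℓ(x_0,…,x_{m−1})·(x_ℓ)^{n̲} + Σ_{f : ℤ_m → ℤ_n} H(f(0),…,f(m−1))·∏_{i∈ℤ_m}∏_{j∈ℤ_n∖{f(i)}} (x_i − j)/(f(i) − j), where each q_ℓ ∈ ℚ[x_0,…,x_{m−1}] and (x)^{n̲} denotes the falling factorial x(x−1)⋯(x−(n−1)). -/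
/-!
The interpolant `∑_f H(v ∘ f) · B_f`, where `B_f` is the product over the coordinates of the
univariate Lagrange basis polynomials, agrees with `H` on the grid `v(ι)^σ`. Hence their
difference vanishes on the grid, and the Combinatorial Nullstellensatz writes it as a
combination of the polynomials `∏_j (X_l - v_j)`.
-/

open MvPolynomial Finset

namespace MvPolynomial

variable {K σ ι : Type*}

theorem eval_aeval_X [CommSemiring K] (x : σ → K) (i : σ) (p : Polynomial K) :
    eval x (Polynomial.aeval (X i) p) = p.eval (x i) := by
  induction p using Polynomial.induction_on <;> simp_all

variable [Field K]

theorem aeval_X_lagrangeBasis [DecidableEq ι] (s : Finset ι) (v : ι → K) (a : ι) (i : σ) :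
    Polynomial.aeval (X i : MvPolynomial σ K) (Lagrange.basis s v a) =
      ∏ j ∈ s.erase a, C ((v a - v j)⁻¹) * (X i - C (v j)) := by
  simp [Lagrange.basis, Lagrange.basisDivisor, algebraMap_eq]

variable [Fintype σ] [Fintype ι] [DecidableEq ι]

noncomputable def gridLagrangeBasis (v : ι → K) (f : σ → ι) : MvPolynomial σ K :=
  ∏ i, ∏ j ∈ univ.erase (f i), C ((v (f i) - v j)⁻¹) * (X i - C (v j))

theorem eval_gridLagrangeBasis {v : ι → K} (hv : Function.Injective v) (f g : σ → ι) :
    eval (v ∘ g) (gridLagrangeBasis v f) = if g = f then 1 else 0 := by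
  simp_rw [gridLagrangeBasis, ← aeval_X_lagrangeBasis, map_prod, eval_aeval_X,
    Function.comp_apply]
  split_ifs with hgf
  · subst hgf
    exact prod_eq_one fun i _ => Lagrange.eval_basis_self hv.injOn (mem_univ _)
  · obtain ⟨i, hi⟩ := Function.ne_iff.mp hgf
    exact prod_eq_zero (mem_univ i) (Lagrange.eval_basis_of_ne (Ne.symm hi) (mem_univ _))

variable [DecidableEq σ]

theorem eval_sum_gridLagrangeBasis {v : ι → K} (hv : Function.Injective v)
    (H : MvPolynomial σ K) (g : σ → ι) :
    eval (v ∘ g) (∑ f : σ → ι, C (eval (v ∘ f) H) * gridLagrangeBasis v f) = eval (v ∘ g) H := by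
  simp [eval_gridLagrangeBasis hv]

theorem exists_eq_sum_mul_prod_add_sum_gridLagrangeBasis [Nonempty ι] {v : ι → K}
    (hv : Function.Injective v) (H : MvPolynomial σ K) :
    ∃ q : σ → MvPolynomial σ K,
      H = ∑ l, q l * ∏ j, (X l - C (v j)) +
        ∑ f : σ → ι, C (eval (v ∘ f) H) * gridLagrangeBasis v f := by
  set L := ∑ f : σ → ι, C (eval (v ∘ f) H) * gridLagrangeBasis v f
  have hvanish : ∀ x : σ → K, (∀ i, x i ∈ univ.map ⟨v, hv⟩) → eval x (H - L) = 0 := by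
    intro x hx
    simp only [mem_map, mem_univ, true_and, Function.Embedding.coeFn_mk] at hx
    choose g hg using hx
    obtain rfl : x = v ∘ g := _root_.funext fun i => (hg i).symm
    rw [map_sub, eval_sum_gridLagrangeBasis hv, sub_self]
  obtain ⟨q, -, hq⟩ := combinatorial_nullstellensatz_exists_linearCombination _
    (fun _ => univ_nonempty.map) _ hvanish
  refine ⟨q, ?_⟩
  rw [← sub_eq_iff_eq_add, hq, Finsupp.linearCombination_apply, Finsupp.sum_fintype _ _ (by simp)]
  simp [prod_map]

end MvPolynomial

theorem multivariate_quotient_remainder_lagrange_general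
    (m n : ℕ) (hn : 0 < n) (H : MvPolynomial (Fin m) ℚ) :
    ∃ q : Fin m → MvPolynomial (Fin m) ℚ,
      H = (∑ l : Fin m, q l * ∏ k ∈ Finset.range n, (X l - C (k : ℚ))) +
        ∑ f : Fin m → Fin n,
          C (eval (fun i : Fin m => ((f i : ℕ) : ℚ)) H) *
            ∏ i : Fin m, ∏ j ∈ Finset.univ.erase (f i),
              C ((((f i : ℕ) : ℚ) - ((j : ℕ) : ℚ))⁻¹) * (X i - C ((j : ℕ) : ℚ)) := by
  have : Nonempty (Fin n) := ⟨⟨0, hn⟩⟩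
  have hv : Function.Injective (fun j : Fin n => ((j : ℕ) : ℚ)) :=
    Nat.cast_injective.comp Fin.val_injective
  obtain ⟨q, hq⟩ := exists_eq_sum_mul_prod_add_sum_gridLagrangeBasis hv H
  refine ⟨q, hq.trans ?_⟩
  simp only [gridLagrangeBasis, Finset.prod_range, Function.comp_def]

/-- Multivariate quotient–remainder theorem with Lagrange interpolation: every
`H ∈ ℚ[x_0,…,x_{m-1}]` can be written as a combination of the falling factorials
`(x_ℓ)^{n̲}` plus the Lagrange interpolation of its values on the lattice
`{0,…,n-1}^m`. -/
theorem multivariate_quotient_remainder_lagrange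
    (m n : ℕ) (hm : 0 < m) (hn : 0 < n) (H : MvPolynomial (Fin m) ℚ) :
    ∃ q : Fin m → MvPolynomial (Fin m) ℚ,
      H = (∑ l : Fin m, q l * ∏ k ∈ Finset.range n, (X l - C (k : ℚ))) +
        ∑ f : Fin m → Fin n,
          C (eval (fun i : Fin m => ((f i : ℕ) : ℚ)) H) *
            ∏ i : Fin m, ∏ j ∈ Finset.univ.erase (f i),
              C ((((f i : ℕ) : ℚ) - ((j : ℕ) : ℚ))⁻¹) * (X i - C ((j : ℕ) : ℚ)) :=
  multivariate_quotient_remainder_lagrange_general m n hn H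
end

section
/- (Monomial support lemma.) Let n be a positive integer, let 𝒮 be a set of permutations of ℤ_n, and let a_σ ∈ ℚ∖{0} for each σ ∈ 𝒮. Then every monomial ∏_{i∈ℤ_n} x_i^{f(i)} appearing with nonzero coefficient in the expansion of Σ_{σ∈𝒮} a_σ·L_σ(x) satisfies |{i ∈ ℤ_n : f(i) = 0}| ≤ 1; that is, each such monomial is a multiple of at least n−1 of the n variables x_0,…,x_{n−1}. -/
open MvPolynomial

lemma X_dvd_lagrangeBasis (n : ℕ) (hn : 0 < n) (f : Fin n → Fin n) (i : Fin n)
    (h : f i ≠ ⟨0, hn⟩) : X i ∣ lagrangeBasis n f := by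
  unfold lagrangeBasis
  have h0 : (⟨0, hn⟩ : Fin n) ∈ Finset.univ.erase (f i) := by
    simp [Finset.mem_erase, Ne, eq_comm, h]
  refine dvd_trans (dvd_trans ?_ (Finset.dvd_prod_of_mem _ h0))
    (Finset.dvd_prod_of_mem _ (Finset.mem_univ i))
  simp only [Nat.cast_zero, map_zero, sub_zero]
  exact dvd_mul_left _ _

/-- Monomial support lemma: every monomial appearing with nonzero coefficient in a
nontrivial rational linear combination of Lagrange basis polynomials indexed by
permutations is a multiple of at least `n-1` of the `n` variables; equivalently, at
most one variable has exponent `0` in each such monomial. -/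
theorem monomial_support_lemma
    (n : ℕ) (hn : 0 < n) (S : Finset (Equiv.Perm (Fin n)))
    (a : Equiv.Perm (Fin n) → ℚ) (ha : ∀ σ ∈ S, a σ ≠ 0) :
    ∀ m ∈ (∑ σ ∈ S, C (a σ) * lagrangeBasis n ⇑σ).support,
      (Finset.univ.filter fun i : Fin n => m i = 0).card ≤ 1 := by
  intro m hm
  by_contra hcard
  push_neg at hcard
  obtain ⟨i₁, hi₁, i₂, hi₂, hne⟩ := Finset.one_lt_card.mp hcard
  simp only [Finset.mem_filter, Finset.mem_univ, true_and] at hi₁ hi₂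
  have key : coeff m (∑ σ ∈ S, C (a σ) * lagrangeBasis n ⇑σ) = 0 := by
    rw [coeff_sum]
    apply Finset.sum_eq_zero
    intro σ _
    have hor : ∃ i, m i = 0 ∧ σ i ≠ ⟨0, hn⟩ := by
      by_cases h1 : σ i₁ = ⟨0, hn⟩
      · exact ⟨i₂, hi₂, fun h2 => hne (σ.injective (h1.trans h2.symm))⟩
      · exact ⟨i₁, hi₁, h1⟩
    obtain ⟨i, hmi, hσi⟩ := hor
    obtain ⟨q, hq⟩ := X_dvd_lagrangeBasis n hn (⇑σ) i hσi
    rw [hq, mul_comm (X i) q, ← mul_assoc, coeff_mul_X', if_neg]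
    simp [Finsupp.mem_support_iff, hmi]
  exact (mem_support_iff.mp hm) key
end

section
/- (Transposition invariance, part I.) Let n be a positive integer and let g : ℤ_n → ℤ_n be a functional tree map. Suppose ℓ_1, ℓ_2 ∈ ℤ_n are sibling leaves of g, i.e., g⁻¹({ℓ_1, ℓ_2}) = ∅ and g(ℓ_1) = g(ℓ_2), and let τ be the transposition of ℤ_n swapping ℓ_1 and ℓ_2. Then the polynomial certificate P_g is invariant under permuting its variables by τ: P_g(x_{τ(0)},…,x_{τ(n−1)}) = P_g(x_0,…,x_{n−1}). -/
/-!
Swapping two sibling leaves `ℓ₁, ℓ₂` fixes every parent `g v` (leaves are nobody's parent), and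
`ℓ₁, ℓ₂` have the same parent and hence the same depth. So the swap `σ` merely permutes the edge
binomials, `σ(e_v) = e_{σ v}`. Each of the Vandermonde-type products `V` and `E_g` then picks up
the factor `sign σ`, and `N_g`, a product over all vertices, is unchanged; as `(sign σ)² = 1`,
`P_g` is invariant.
-/

open MvPolynomial

open Finset in
lemma prod_Iio_sub_comp_perm {R : Type*} [CommRing R] {n : ℕ} (e : Fin n → R)
    (σ : Equiv.Perm (Fin n)) :
    ∏ v : Fin n, ∏ u ∈ Iio v, (e (σ v) - e (σ u))
      = (Equiv.Perm.sign σ : ℤ) * ∏ v : Fin n, ∏ u ∈ Iio v, (e v - e u) := by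
  have hdet : ∀ f : Fin n → R, ∏ v : Fin n, ∏ u ∈ Iio v, (f v - f u)
      = (Matrix.vandermonde f).det := fun f => by
    rw [Matrix.det_vandermonde]
    exact prod_comm' fun v u => by simp
  have hperm : Matrix.vandermonde (e ∘ σ) = (Matrix.vandermonde e).submatrix σ id := by
    ext i j; simp [Matrix.vandermonde]
  rw [hdet e, ← Matrix.det_permute, ← hperm]
  exact hdet (e ∘ σ)

lemma apply_swap_eq_self {α β : Type*} [DecidableEq α] {f : α → β} {a b : α}
    (h : f a = f b) (x : α) : f (Equiv.swap a b x) = f x := by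
  rw [Equiv.swap_apply_def]
  split_ifs with hxa hxb
  · rw [hxa, h]
  · rw [hxb, h]
  · rfl

lemma treeDist_eq_of_sibling_leaves {n : ℕ} {g : Fin n → Fin n} {a b : Fin n}
    (ha : ∀ v, g v ≠ a) (hb : ∀ v, g v ≠ b) (hab : g a = g b) :
    treeDist n g a = treeDist n g b := by
  rcases n with _ | _ | m
  · exact a.elim0
  · rw [Subsingleton.elim (α := Fin 1) a b]
  · unfold treeDist
    rw [show m + 1 + 1 - 1 = m + 1 by omega]
    congr 1
    -- at step 0 neither leaf is reached, since `g^[m + 1] v` lies in the range of `g`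
    ext (_ | k)
    · simp only [Set.mem_ofPred_eq, Function.iterate_zero_apply, Function.iterate_succ_apply']
      exact ⟨fun h => (ha _ h.symm).elim, fun h => (hb _ h.symm).elim⟩
    · simp only [Set.mem_ofPred_eq, Function.iterate_succ_apply, hab]

lemma rename_edgeBinom {n : ℕ} (g : Fin n → Fin n) (σ : Equiv.Perm (Fin n))
    (hfix : ∀ v, σ (g v) = g v) (hg : ∀ v, g (σ v) = g v)
    (hd : ∀ v, treeDist n g (σ v) = treeDist n g v) (v : Fin n) :
    rename σ (edgeBinom n g v) = edgeBinom n g (σ v) := by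
  simp only [edgeBinom, map_mul, map_pow, map_neg, map_one, map_sub, rename_X, hfix, hg, hd]

lemma rename_certP_of_rename_edgeBinom {n : ℕ} (g : Fin n → Fin n) (σ : Equiv.Perm (Fin n))
    (h : ∀ v, rename σ (edgeBinom n g v) = edgeBinom n g (σ v)) :
    rename σ (certP n g) = certP n g := by
  have hsign :
      ((Equiv.Perm.sign σ : ℤ) : MvPolynomial (Fin n) ℚ) * (Equiv.Perm.sign σ : ℤ) = 1 := by
    rw [← Int.cast_mul, ← Units.val_mul, Int.units_mul_self, Units.val_one, Int.cast_one]
  have hN : ∏ v : Fin n, ∏ i ∈ Finset.Ioo 0 n, (edgeBinom n g (σ v) + C (i : ℚ))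
      = ∏ v : Fin n, ∏ i ∈ Finset.Ioo 0 n, (edgeBinom n g v + C (i : ℚ)) :=
    Equiv.prod_comp σ fun v => ∏ i ∈ Finset.Ioo 0 n, (edgeBinom n g v + C (i : ℚ))
  unfold certP
  simp only [map_mul, map_prod, map_sub, map_add, rename_X, rename_C, h]
  rw [prod_Iio_sub_comp_perm (fun v => X v), prod_Iio_sub_comp_perm (edgeBinom n g), hN,
    mul_mul_mul_comm, hsign, one_mul]

theorem certP_transposition_invariant_general
    (n : ℕ) (g : Fin n → Fin n)
    (l₁ l₂ : Fin n)
    (hleaf : ∀ v : Fin n, g v ≠ l₁ ∧ g v ≠ l₂) (hsib : g l₁ = g l₂) :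
    MvPolynomial.rename (⇑(Equiv.swap l₁ l₂)) (certP n g) = certP n g := by
  have hdist := treeDist_eq_of_sibling_leaves (fun v => (hleaf v).1) (fun v => (hleaf v).2) hsib
  refine rename_certP_of_rename_edgeBinom g _ (rename_edgeBinom g _ ?_ ?_ ?_)
  · exact fun v => Equiv.swap_apply_of_ne_of_ne (hleaf v).1 (hleaf v).2
  · exact apply_swap_eq_self hsib
  · exact apply_swap_eq_self hdist

/-- Transposition invariance, part I: the polynomial certificate `P_g` is invariant
under the transposition of variables associated with a pair of sibling leaves. -/
theorem certP_transposition_invariant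
    (n : ℕ) (hn : 0 < n) (g : Fin n → Fin n) (hg : IsFunctionalTreeMap n g)
    (l₁ l₂ : Fin n) (hne : l₁ ≠ l₂)
    (hleaf : ∀ v : Fin n, g v ≠ l₁ ∧ g v ≠ l₂) (hsib : g l₁ = g l₂) :
    MvPolynomial.rename (⇑(Equiv.swap l₁ l₂)) (certP n g) = certP n g :=
  certP_transposition_invariant_general n g l₁ l₂ hleaf hsib
end

section
/- (Transposition invariance, part II.) Let n be a positive integer and let g : ℤ_n → ℤ_n be a functional tree map. Suppose ℓ_1, ℓ_2 ∈ ℤ_n are sibling leaves of g, i.e., g⁻¹({ℓ_1, ℓ_2}) = ∅ and g(ℓ_1) = g(ℓ_2), and let τ be the transposition of ℤ_n swapping ℓ_1 and ℓ_2. Then the canonical representative P̄_g of the polynomial certificate P_g is invariant under permuting its variables by τ: P̄_g(x_{τ(0)},…,x_{τ(n−1)}) = P̄_g(x_0,…,x_{n−1}). -/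
open MvPolynomial

lemma prod_Iio_comp_involutive {R : Type*} [CommMonoid R] {n : ℕ} (τ : Fin n → Fin n)
    (hτ : ∀ x, τ (τ x) = x) (F : Fin n → Fin n → R) (hsym : ∀ u v, F u v = F v u) :
    (∏ v : Fin n, ∏ u ∈ Finset.Iio v, F (τ u) (τ v))
      = ∏ v : Fin n, ∏ u ∈ Finset.Iio v, F u v := by
  have hinj : Function.Injective τ := Function.LeftInverse.injective hτ
  rw [Finset.prod_sigma', Finset.prod_sigma']
  refine Finset.prod_nbij'
    (fun p => if τ p.2 < τ p.1 then ⟨τ p.1, τ p.2⟩ else ⟨τ p.2, τ p.1⟩)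
    (fun p => if τ p.2 < τ p.1 then ⟨τ p.1, τ p.2⟩ else ⟨τ p.2, τ p.1⟩)
    ?_ ?_ ?_ ?_ ?_
  · rintro ⟨v, u⟩ hm
    simp only [Finset.mem_sigma, Finset.mem_univ, Finset.mem_Iio, true_and] at hm
    have hne : τ u ≠ τ v := fun h => absurd (hinj h) (ne_of_lt hm)
    dsimp only
    split_ifs with h
    · simpa using h
    · simpa using lt_of_le_of_ne (not_lt.mp h) hne.symm
  · rintro ⟨v, u⟩ hm
    simp only [Finset.mem_sigma, Finset.mem_univ, Finset.mem_Iio, true_and] at hm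
    have hne : τ u ≠ τ v := fun h => absurd (hinj h) (ne_of_lt hm)
    dsimp only
    split_ifs with h
    · simpa using h
    · simpa using lt_of_le_of_ne (not_lt.mp h) hne.symm
  · rintro ⟨v, u⟩ hm
    simp only [Finset.mem_sigma, Finset.mem_univ, Finset.mem_Iio, true_and] at hm
    dsimp only
    split_ifs with h h2 h2 <;> dsimp only at * <;> simp only [hτ] at h2 ⊢ <;>
      first
        | rfl
        | exact absurd hm h2
        | exact absurd h2 (not_lt.mpr hm.le)
  · rintro ⟨v, u⟩ hm
    simp only [Finset.mem_sigma, Finset.mem_univ, Finset.mem_Iio, true_and] at hm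
    dsimp only
    split_ifs with h h2 h2 <;> dsimp only at * <;> simp only [hτ] at h2 ⊢ <;>
      first
        | rfl
        | exact absurd hm h2
        | exact absurd h2 (not_lt.mpr hm.le)
  · rintro ⟨v, u⟩ hm
    dsimp only
    split_ifs with h
    · rfl
    · exact hsym _ _

lemma rename_lagrangeBasis {n : ℕ} (τ : Fin n → Fin n) (hτ : ∀ x, τ (τ x) = x)
    (f : Fin n → Fin n) :
    rename τ (lagrangeBasis n f) = lagrangeBasis n (f ∘ τ) := by
  have hbij : Function.Bijective τ := Function.Involutive.bijective hτ
  unfold lagrangeBasis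
  rw [map_prod]
  let e : Equiv.Perm (Fin n) := Equiv.ofBijective τ hbij
  calc (∏ i : Fin n, rename τ (∏ j ∈ Finset.univ.erase (f i),
          C ((((f i : ℕ) : ℚ) - ((j : ℕ) : ℚ))⁻¹) * (X i - C ((j : ℕ) : ℚ))))
      = ∏ i : Fin n, ∏ j ∈ Finset.univ.erase (f i),
          C ((((f i : ℕ) : ℚ) - ((j : ℕ) : ℚ))⁻¹) * (X (τ i) - C ((j : ℕ) : ℚ)) := by
        simp [map_prod, map_mul, rename_C, map_sub, rename_X]
    _ = ∏ i : Fin n, ∏ j ∈ Finset.univ.erase (f (e i)),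
          C ((((f (e i) : ℕ) : ℚ) - ((j : ℕ) : ℚ))⁻¹) * (X (τ (e i)) - C ((j : ℕ) : ℚ)) :=
        (Equiv.prod_comp e _).symm
    _ = ∏ i : Fin n, ∏ j ∈ Finset.univ.erase ((f ∘ τ) i),
          C (((((f ∘ τ) i : ℕ) : ℚ) - ((j : ℕ) : ℚ))⁻¹) * (X i - C ((j : ℕ) : ℚ)) := by
        apply Finset.prod_congr rfl
        intro i _
        have : τ (e i) = i := hτ i
        rw [this]
        rfl

/-- Transposition invariance, part II: the canonical representative of the polynomial
certificate `P_g` is invariant under the transposition of variables associated with a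
pair of sibling leaves. -/
theorem canonRep_certP_transposition_invariant
    (n : ℕ) (hn : 0 < n) (g : Fin n → Fin n) (hg : IsFunctionalTreeMap n g)
    (l₁ l₂ : Fin n) (hne : l₁ ≠ l₂)
    (hleaf : ∀ v : Fin n, g v ≠ l₁ ∧ g v ≠ l₂) (hsib : g l₁ = g l₂) :
    MvPolynomial.rename (⇑(Equiv.swap l₁ l₂)) (canonRep n (certP n g))
      = canonRep n (certP n g) := by
  set τ : Fin n → Fin n := ⇑(Equiv.swap l₁ l₂) with hτdef
  have hτ : ∀ x, τ (τ x) = x := fun x => Equiv.swap_apply_self l₁ l₂ x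
  -- root facts
  obtain ⟨r, hr⟩ := hg
  have hgr : g r = r := by
    have h1 : g^[(n-1)+1] r = r := by rw [Function.iterate_succ_apply]; exact hr (g r)
    rw [Function.iterate_succ_apply', hr r] at h1
    exact h1
  have hrl₁ : r ≠ l₁ := by rw [← hgr]; exact (hleaf r).1
  have hrl₂ : r ≠ l₂ := by rw [← hgr]; exact (hleaf r).2
  -- distances of the two leaves agree
  have hd12 : treeDist n g l₁ = treeDist n g l₂ := by
    unfold treeDist
    congr 1
    ext k
    simp only [Set.mem_setOf_eq, hr l₁, hr l₂]
    cases k with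
    | zero => simp [Ne.symm hrl₁, Ne.symm hrl₂]
    | succ k => rw [Function.iterate_succ_apply, Function.iterate_succ_apply, hsib]
  -- g ∘ τ = g, τ ∘ g = g, treeDist ∘ τ = treeDist
  have hgτ : ∀ v, g (τ v) = g v := by
    intro v
    rcases eq_or_ne v l₁ with h | h1
    · rw [h]; simp only [hτdef, Equiv.swap_apply_left]; exact hsib.symm
    rcases eq_or_ne v l₂ with h | h2
    · rw [h]; simp only [hτdef, Equiv.swap_apply_right]; exact hsib
    · rw [hτdef, Equiv.swap_apply_of_ne_of_ne h1 h2]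
  have hτg : ∀ v, τ (g v) = g v := fun v =>
    Equiv.swap_apply_of_ne_of_ne (hleaf v).1 (hleaf v).2
  have hdτ : ∀ v, treeDist n g (τ v) = treeDist n g v := by
    intro v
    rcases eq_or_ne v l₁ with h | h1
    · rw [h]; simp only [hτdef, Equiv.swap_apply_left]; exact hd12.symm
    rcases eq_or_ne v l₂ with h | h2
    · rw [h]; simp only [hτdef, Equiv.swap_apply_right]; exact hd12
    · rw [hτdef, Equiv.swap_apply_of_ne_of_ne h1 h2]
  -- renaming edge binomials
  have hedge : ∀ v, rename τ (edgeBinom n g v) = edgeBinom n g (τ v) := by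
    intro v
    unfold edgeBinom
    rw [map_mul, map_pow, map_neg, map_one, map_sub, rename_X, rename_X,
      hτg v, hgτ v, hdτ v]
  -- the certificate is literally invariant under the renaming
  have hcert : rename τ (certP n g) = certP n g := by
    have key : certP n g =
        (∏ v : Fin n, ∏ u ∈ Finset.Iio v,
          ((X v - X u) * (edgeBinom n g v - edgeBinom n g u))) *
        (∏ v : Fin n, ∏ i ∈ Finset.Ioo 0 n, (edgeBinom n g v + C (i : ℚ))) := by
      unfold certP
      rw [← Finset.prod_mul_distrib]
      congr 1
      apply Finset.prod_congr rfl
      intro v _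
      rw [← Finset.prod_mul_distrib]
    rw [key, map_mul]
    congr 1
    · rw [map_prod]
      simp only [map_prod, map_mul, map_sub, rename_X, hedge]
      exact prod_Iio_comp_involutive τ hτ
        (fun u v => (X v - X u) * (edgeBinom n g v - edgeBinom n g u))
        (fun u v => by ring)
    · rw [map_prod]
      simp only [map_prod, map_add, rename_C, hedge]
      exact Equiv.prod_comp (Equiv.swap l₁ l₂)
        (fun v => ∏ i ∈ Finset.Ioo 0 n, (edgeBinom n g v + C (i : ℚ)))
  -- now transfer invariance through the canonical representative
  unfold canonRep
  rw [map_sum]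
  simp only [map_mul, rename_C, rename_lagrangeBasis τ hτ]
  apply Fintype.sum_bijective (fun f : Fin n → Fin n => f ∘ τ)
    (Function.Involutive.bijective (fun f => by ext i; simp [hτ]))
  intro f
  congr 1
  congr 1
  have : (fun i : Fin n => (((f ∘ τ) i : ℕ) : ℚ))
      = (fun i : Fin n => ((f i : ℕ) : ℚ)) ∘ τ := rfl
  rw [this, ← eval_rename, hcert]
end

section
/- Let n be a positive integer and let g : ℤ_n → ℤ_n be a functional tree map with root r. Let A be the n×n complex 0–1 bi-adjacency matrix of the left-to-right orientation of g: A(v, g(v)) = 1 for each v ≠ r with (−1)^{d_g(v)} = +1, A(g(v), v) = 1 for each v ≠ r with (−1)^{d_g(v)} = −1, A(r, r) = 1, and all other entries 0. Then the n²×n² block diagonal matrix I_n ⊗ A (Kronecker product) is unitarily apportionable with apportionment constant 1/n: there exists a unitary matrix Q ∈ ℂ^{n²×n²} such that every entry of Q·(I_n ⊗ A)·Q* has absolute value 1/n. -/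
/-!
Let `F` be a flat unitary (a normalised Fourier matrix), label the vertices by some
`t : ℤ_n → ℤ_n`, and let `Q` first move the basis vector `(a, x)` to `(a + t x, x)` and then
apply `1 ⊗ F`. The permutation turns the `(a, b)` block of `1 ⊗ A` into the part of `A` supported
on the arcs `(x, y)` with `t x - t y = b - a`, and conjugation by `1 ⊗ F` turns a block with a
single entry of modulus one into a block of constant modulus `1/n`. So it suffices that `t` is
graceful: `(x, y) ↦ t x - t y` maps the arcs of `A` bijectively onto `ℤ_n`.

Every vertex `v ≠ r` owns the arc between `v` and `g v`, and `r` owns the loop at `r`. Summing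
`±(u - r)` along the path from `v` to the root, the sign given by the parity of the depth of `u`,
gives a labelling whose difference on the arc owned by `v` is `v - r`, hence a graceful one.
-/

open Matrix Kronecker

namespace Matrix

section Reindex

variable {m n α : Type*} [Fintype m] [Fintype n] [DecidableEq m] [DecidableEq n]

theorem submatrix_mem_unitary [Semiring α] [StarRing α] {A : Matrix m m α}
    (hA : A ∈ unitary (Matrix m m α)) (e₁ e₂ : n ≃ m) :
    A.submatrix e₁ e₂ ∈ unitary (Matrix n n α) := by
  constructor <;>
  rw [star_eq_conjTranspose, conjTranspose_submatrix, submatrix_mul_equiv,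
    ← star_eq_conjTranspose]
  · rw [hA.1, submatrix_one_equiv]
  · rw [hA.2, submatrix_one_equiv]

omit [DecidableEq m] in
theorem submatrix_id_mul_mul_conjTranspose [Semiring α] [StarRing α] (P N : Matrix m m α)
    (e : m ≃ m) :
    P.submatrix id e * N * (P.submatrix id e)ᴴ = P * N.submatrix e.symm e.symm * Pᴴ := by
  have hN : N = (N.submatrix e.symm e.symm).submatrix e e := by simp
  conv_lhs => rw [hN]
  rw [submatrix_mul_equiv, conjTranspose_submatrix, submatrix_mul_equiv, submatrix_id_id]

end Reindex

variable {α ι : Type*} [Fintype α] [DecidableEq α] [Fintype ι]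

theorem one_kronecker_mul_mul_conjTranspose_apply (F : Matrix ι ι ℂ)
    (B : Matrix (α × ι) (α × ι) ℂ) (a b : α) (j l : ι) :
    (((1 : Matrix α α ℂ) ⊗ₖ F) * B * ((1 : Matrix α α ℂ) ⊗ₖ F)ᴴ) (a, j) (b, l) =
      ∑ e : ι × ι, F j e.1 * B (a, e.1) (b, e.2) * star (F l e.2) := by
  simp only [mul_apply, kroneckerMap_apply, one_apply, ite_mul, one_mul, zero_mul,
    Fintype.sum_prod_type, Finset.sum_ite_irrel, Finset.sum_const_zero, Finset.sum_ite_eq,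
    Finset.mem_univ, ↓reduceIte, conjTranspose_apply, RCLike.star_def, apply_ite (starRingEnd ℂ),
    map_zero, mul_ite, Finset.sum_mul, mul_zero]
  rw [Finset.sum_comm]

theorem norm_one_kronecker_mul_mul_conjTranspose_apply {F : Matrix ι ι ℂ} {κ : ℝ}
    (hF : ∀ j x, ‖F j x‖ = κ) {B : Matrix (α × ι) (α × ι) ℂ}
    (hB : ∀ p q, B p q ≠ 0 → ‖B p q‖ = 1) {a b : α}
    (hab : ∃! e : ι × ι, B (a, e.1) (b, e.2) ≠ 0) (j l : ι) :
    ‖(((1 : Matrix α α ℂ) ⊗ₖ F) * B * ((1 : Matrix α α ℂ) ⊗ₖ F)ᴴ) (a, j) (b, l)‖ = κ ^ 2 := by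
  obtain ⟨e, he, huniq⟩ := hab
  rw [one_kronecker_mul_mul_conjTranspose_apply,
    Fintype.sum_eq_single e fun e' he' => by
      rw [not_ne_iff.1 (mt (huniq e') he'), mul_zero, zero_mul],
    norm_mul, norm_mul, norm_star, hF, hF, hB _ _ he, mul_one, sq]

def IsGracefulLabelling {R G : Type*} [Zero R] [Sub G] (M : Matrix ι ι R) (t : ι → G) : Prop :=
  ∀ d : G, ∃! e : ι × ι, M e.1 e.2 ≠ 0 ∧ t e.1 - t e.2 = d

theorem exists_mem_unitary_norm_one_kronecker_conj_apply_eq {G : Type*} [AddCommGroup G]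
    [Fintype G] [DecidableEq G] [DecidableEq ι] {F : Matrix ι ι ℂ}
    (hF : F ∈ unitary (Matrix ι ι ℂ)) {κ : ℝ} (hFnorm : ∀ j x, ‖F j x‖ = κ) {M : Matrix ι ι ℂ}
    (hM : ∀ x y, M x y ≠ 0 → ‖M x y‖ = 1) {t : ι → G} (ht : M.IsGracefulLabelling t) :
    ∃ Q : Matrix (G × ι) (G × ι) ℂ, Q ∈ unitary (Matrix (G × ι) (G × ι) ℂ) ∧
      ∀ p q, ‖(Q * ((1 : Matrix G G ℂ) ⊗ₖ M) * Qᴴ) p q‖ = κ ^ 2 := by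
  let σ : G × ι ≃ G × ι :=
    { toFun := fun p => (p.1 + t p.2, p.2)
      invFun := fun p => (p.1 - t p.2, p.2)
      left_inv := fun p => by simp
      right_inv := fun p => by simp }
  refine ⟨((1 : Matrix G G ℂ) ⊗ₖ F).submatrix id σ.symm,
    submatrix_mem_unitary (kronecker_mem_unitary (one_mem _) hF) (Equiv.refl _) σ.symm,
    fun ⟨a, j⟩ ⟨b, l⟩ => ?_⟩
  have hB : ∀ p q, ((1 : Matrix G G ℂ) ⊗ₖ M).submatrix σ σ p q =
      if p.1 + t p.2 = q.1 + t q.2 then M p.2 q.2 else 0 := fun p q => by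
    simp [σ, one_apply]
  have hblock : ∀ x y, ((1 : Matrix G G ℂ) ⊗ₖ M).submatrix σ σ (a, x) (b, y) ≠ 0 ↔
      M x y ≠ 0 ∧ t x - t y = b - a := fun x y => by
    rw [hB, ite_ne_right_iff, sub_eq_sub_iff_add_eq_add, add_comm (t x), and_comm]
  rw [submatrix_id_mul_mul_conjTranspose, Equiv.symm_symm]
  refine norm_one_kronecker_mul_mul_conjTranspose_apply hFnorm (fun p q hpq => ?_)
    (by simpa only [hblock] using ht (b - a)) j l
  rw [hB] at hpq ⊢
  obtain ⟨hrow, hpq⟩ := ite_ne_right_iff.1 hpq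
  rw [if_pos hrow]
  exact hM _ _ hpq

end Matrix

namespace AddChar

variable {R : Type*} [CommRing R] [Fintype R]

noncomputable def fourierMatrix (ψ : AddChar R ℂ) : Matrix R R ℂ :=
  Matrix.of fun j x => ((√(Fintype.card R))⁻¹ : ℝ) * ψ (j * x)

theorem norm_fourierMatrix_apply (ψ : AddChar R ℂ) (j x : R) :
    ‖ψ.fourierMatrix j x‖ = (√(Fintype.card R))⁻¹ := by
  simp [fourierMatrix]

theorem fourierMatrix_mul_star_apply (ψ : AddChar R ℂ) (j l x : R) :
    ψ.fourierMatrix j x * star (ψ.fourierMatrix l x) =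
      (Fintype.card R : ℂ)⁻¹ * ψ (x * (j - l)) := by
  have hκ : (((√(Fintype.card R))⁻¹ : ℝ) : ℂ) * (((√(Fintype.card R))⁻¹ : ℝ) : ℂ) =
      (Fintype.card R : ℂ)⁻¹ := by
    rw [← Complex.ofReal_mul, ← mul_inv, Real.mul_self_sqrt (Nat.cast_nonneg _)]
    push_cast
    rfl
  rw [show x * (j - l) = j * x + -(l * x) by ring, map_add_eq_mul, map_neg_eq_conj, ← hκ]
  simp only [fourierMatrix, of_apply, star_mul', Complex.star_def, Complex.conj_ofReal]
  ring

theorem fourierMatrix_mem_unitary [DecidableEq R] {ψ : AddChar R ℂ} (hψ : ψ.IsPrimitive) :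
    ψ.fourierMatrix ∈ unitary (Matrix R R ℂ) := by
  refine Matrix.mem_unitaryGroup_iff.2 ?_
  ext j l
  simp only [Matrix.mul_apply, Matrix.star_apply, fourierMatrix_mul_star_apply,
    ← Finset.mul_sum, sum_mulShift _ hψ, sub_eq_zero, Matrix.one_apply]
  split_ifs <;> simp

end AddChar

theorem Matrix.exists_mem_unitary_forall_norm_eq_inv_sqrt (n : ℕ) [NeZero n] :
    ∃ F : Matrix (Fin n) (Fin n) ℂ, F ∈ unitary (Matrix (Fin n) (Fin n) ℂ) ∧
      ∀ j x, ‖F j x‖ = (√n)⁻¹ :=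
  let e := (ZMod.finEquiv n).toEquiv
  ⟨ZMod.stdAddChar.fourierMatrix.submatrix e e,
    submatrix_mem_unitary (AddChar.fourierMatrix_mem_unitary (ZMod.isPrimitive_stdAddChar n)) e e,
    fun j x => by simp [AddChar.norm_fourierMatrix_apply, ZMod.card]⟩

section FunctionalTree

variable {n : ℕ} {g : Fin n → Fin n} {r : Fin n}

theorem treeDist_eq_sInf (hr : ∀ v, g^[n - 1] v = r) (v : Fin n) :
    treeDist n g v = sInf {k | g^[k] v = r} := by
  simp only [treeDist, hr]

theorem treeDist_eq_zero_iff (hr : ∀ v, g^[n - 1] v = r) {v : Fin n} :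
    treeDist n g v = 0 ↔ v = r := by
  rw [treeDist_eq_sInf hr, Nat.sInf_eq_zero,
    or_iff_left (Set.nonempty_iff_ne_empty.1 ⟨n - 1, hr v⟩)]
  rfl

theorem treeDist_eq_treeDist_apply_add_one (hr : ∀ v, g^[n - 1] v = r) {v : Fin n}
    (hv : v ≠ r) : treeDist n g v = treeDist n g (g v) + 1 := by
  have hpos : 1 ≤ sInf {k | g^[k] v = r} := by
    rwa [← treeDist_eq_sInf hr, Nat.one_le_iff_ne_zero, Ne, treeDist_eq_zero_iff hr]
  rw [treeDist_eq_sInf hr, treeDist_eq_sInf hr, ← Nat.sInf_add hpos]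
  simp only [Function.iterate_succ_apply]

noncomputable def treePotential {G : Type*} [AddCommMonoid G] (n : ℕ) (g : Fin n → Fin n)
    (w : Fin n → G) (v : Fin n) : G :=
  ∑ k ∈ Finset.range (treeDist n g v), w (g^[k] v)

theorem treePotential_of_ne {G : Type*} [AddCommMonoid G] (hr : ∀ v, g^[n - 1] v = r)
    (w : Fin n → G) {v : Fin n} (hv : v ≠ r) :
    treePotential n g w v = treePotential n g w (g v) + w v := by
  rw [treePotential, treeDist_eq_treeDist_apply_add_one hr hv, Finset.sum_range_succ']
  simp only [Function.iterate_succ_apply, Function.iterate_zero_apply]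
  rfl

def IsTreeBiadjacent (n : ℕ) (g : Fin n → Fin n) (r x y : Fin n) : Prop :=
  (x ≠ r ∧ Even (treeDist n g x) ∧ y = g x) ∨ (y ≠ r ∧ ¬ Even (treeDist n g y) ∧ x = g y) ∨
    (x = r ∧ y = r)

-- The instance of the unfolded condition, so that `treeBiadjMatrix` is definitionally the
-- matrix `A` of the theorem.
noncomputable instance (n : ℕ) (g : Fin n → Fin n) (r x y : Fin n) :
    Decidable (IsTreeBiadjacent n g r x y) :=
  inferInstanceAs (Decidable (_ ∨ _ ∨ _))

noncomputable def treeBiadjMatrix (n : ℕ) (g : Fin n → Fin n) (r : Fin n) :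
    Matrix (Fin n) (Fin n) ℂ :=
  Matrix.of fun x y => if IsTreeBiadjacent n g r x y then 1 else 0

theorem treeBiadjMatrix_apply_ne_zero_iff {x y : Fin n} :
    treeBiadjMatrix n g r x y ≠ 0 ↔ IsTreeBiadjacent n g r x y := by
  simp [treeBiadjMatrix]

theorem norm_treeBiadjMatrix_apply_of_ne_zero (x y : Fin n)
    (h : treeBiadjMatrix n g r x y ≠ 0) : ‖treeBiadjMatrix n g r x y‖ = 1 := by
  simp [treeBiadjMatrix, treeBiadjMatrix_apply_ne_zero_iff.1 h]

noncomputable def treeArc (n : ℕ) (g : Fin n → Fin n) (r v : Fin n) : Fin n × Fin n :=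
  if v = r then (r, r) else if Even (treeDist n g v) then (v, g v) else (g v, v)

theorem isTreeBiadjacent_treeArc (v : Fin n) :
    IsTreeBiadjacent n g r (treeArc n g r v).1 (treeArc n g r v).2 := by
  unfold treeArc
  split_ifs with hv heven
  · exact .inr (.inr ⟨rfl, rfl⟩)
  · exact .inl ⟨hv, heven, rfl⟩
  · exact .inr (.inl ⟨hv, heven, rfl⟩)

theorem exists_treeArc_eq {x y : Fin n} (h : IsTreeBiadjacent n g r x y) :
    ∃ v, treeArc n g r v = (x, y) := by
  rcases h with ⟨hx, heven, rfl⟩ | ⟨hy, hodd, rfl⟩ | ⟨hx, hy⟩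
  · exact ⟨x, by simp [treeArc, hx, heven]⟩
  · exact ⟨y, by simp [treeArc, hy, hodd]⟩
  · exact ⟨r, by simp [treeArc, hx, hy]⟩

variable [NeZero n]

noncomputable def treeLabel (n : ℕ) [NeZero n] (g : Fin n → Fin n) (r : Fin n) :
    Fin n → Fin n :=
  treePotential n g fun u => if Even (treeDist n g u) then u - r else r - u

theorem treeLabel_sub_treeLabel_treeArc (hr : ∀ v, g^[n - 1] v = r) (v : Fin n) :
    treeLabel n g r (treeArc n g r v).1 - treeLabel n g r (treeArc n g r v).2 = v - r := by
  unfold treeArc treeLabel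
  split_ifs with hv heven
  · rw [hv, sub_self, sub_self]
  · rw [treePotential_of_ne hr _ hv, if_pos heven, add_sub_cancel_left]
  · rw [treePotential_of_ne hr _ hv, if_neg heven]
    abel

theorem isGracefulLabelling_treeLabel (hr : ∀ v, g^[n - 1] v = r) :
    (treeBiadjMatrix n g r).IsGracefulLabelling (treeLabel n g r) := by
  intro d
  simp only [treeBiadjMatrix_apply_ne_zero_iff]
  refine ⟨treeArc n g r (d + r), ⟨isTreeBiadjacent_treeArc _, ?_⟩, ?_⟩
  · rw [treeLabel_sub_treeLabel_treeArc hr, add_sub_cancel_right]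
  · rintro e ⟨he, hd⟩
    obtain ⟨v, hv⟩ := exists_treeArc_eq he
    rw [Prod.mk.eta] at hv
    subst hv
    rw [treeLabel_sub_treeLabel_treeArc hr] at hd
    rw [← hd, sub_add_cancel]

end FunctionalTree

/-- Let `g` be a functional tree map with root `r` and let `A` be the 0–1 bi-adjacency
matrix of its left-to-right orientation. Then `I_n ⊗ A` is unitarily apportionable with
apportionment constant `1/n`: there is a unitary `Q` with every entry of
`Q (I_n ⊗ A) Q*` of absolute value `1/n`. -/
theorem kronecker_biadjacency_unitarily_apportionable
    (n : ℕ) (hn : 0 < n) (g : Fin n → Fin n) (r : Fin n)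
    (hr : ∀ v : Fin n, g^[n - 1] v = r)
    (A : Matrix (Fin n) (Fin n) ℂ)
    (hA : ∀ v w : Fin n, A v w =
      if (v ≠ r ∧ Even (treeDist n g v) ∧ w = g v) ∨
          (w ≠ r ∧ ¬ Even (treeDist n g w) ∧ v = g w) ∨
          (v = r ∧ w = r) then 1 else 0) :
    ∃ Q : Matrix (Fin n × Fin n) (Fin n × Fin n) ℂ,
      Q * Qᴴ = 1 ∧ Qᴴ * Q = 1 ∧
        ∀ p q : Fin n × Fin n,
          ‖(Q * ((1 : Matrix (Fin n) (Fin n) ℂ) ⊗ₖ A) * Qᴴ) p q‖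
            = 1 / n := by
  have : NeZero n := ⟨hn.ne'⟩
  obtain rfl : A = treeBiadjMatrix n g r := Matrix.ext hA
  obtain ⟨F, hF, hFnorm⟩ := exists_mem_unitary_forall_norm_eq_inv_sqrt n
  obtain ⟨Q, hQ, hQA⟩ := exists_mem_unitary_norm_one_kronecker_conj_apply_eq hF hFnorm
    norm_treeBiadjMatrix_apply_of_ne_zero (isGracefulLabelling_treeLabel hr)
  exact ⟨Q, hQ.2, hQ.1, fun p q => by rw [hQA, inv_pow, Real.sq_sqrt n.cast_nonneg, one_div]⟩
end

section
/- Let n be a positive integer, let ω ∈ ℂ be a primitive n-th root of unity, let D = diag(1, ω, ω², …, ω^{n−1}), and let C be the n×n cyclic shift permutation matrix (the circulant matrix with first row (0,1,0,…,0)). Then the n²×n² block matrix U whose (i,j)-block (for 0 ≤ i, j < n) is the n×n matrix C^j·D^i/√n is unitary, i.e., U·U* = I_{n²}. -/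
/-!
The `(i, i')` block of `U Uᴴ` is `n⁻¹ ∑ⱼ Cʲ (Dⁱ D^{-i'}) C^{-j}`. Conjugating a diagonal
matrix by the cyclic shift `Cʲ` translates its diagonal by `j`, so the sum over `j` is the
scalar matrix `∑_c ω^{(i - i') c}`, which is `n` for `i = i'` and `0` otherwise.
-/

open Matrix

namespace Equiv.Perm

variable {ι R : Type*} [Fintype ι] [DecidableEq ι]

theorem permMatrix_pow [Semiring R] (σ : Perm ι) (k : ℕ) :
    (σ ^ k).permMatrix R = σ.permMatrix R ^ k := by
  induction k with
  | zero => simp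
  | succ k ih => rw [pow_succ', Matrix.permMatrix_mul, ih, pow_succ]

theorem permMatrix_mul_diagonal_mul_conjTranspose [NonAssocSemiring R] [StarRing R]
    (σ : Perm ι) (g : ι → R) :
    σ.permMatrix R * diagonal g * (σ.permMatrix R)ᴴ = diagonal (g ∘ σ) := by
  rw [conjTranspose_permMatrix, PEquiv.toMatrix_toPEquiv_mul, PEquiv.mul_toMatrix_toPEquiv,
    submatrix_submatrix]
  exact submatrix_diagonal_equiv g σ

end Equiv.Perm

namespace Matrix

theorem sum_diagonal_comp_addRight {G R : Type*} [AddGroup G] [Fintype G] [DecidableEq G]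
    [NonAssocSemiring R] (g : G → R) :
    ∑ j : G, diagonal (g ∘ Equiv.addRight j) = (∑ c, g c) • (1 : Matrix G G R) := by
  ext a b
  rw [smul_one_eq_diagonal, sum_apply]
  by_cases h : a = b
  · subst h
    simpa using Equiv.sum_comp (Equiv.addLeft a) g
  · simp [h]

theorem comp_mul_conjTranspose_comp {I J R : Type*} [Fintype I] [Fintype J]
    [AddCommMonoid R] [Mul R] [Star R] (B : Matrix I I (Matrix J J R)) :
    comp I I J J R B * (comp I I J J R B)ᴴ = comp I I J J R (B * Bᴴ) :=
  ((compRingEquiv I J R).map_mul B Bᴴ).symm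

end Matrix

open Fin.NatCast in
theorem Fin.nsmul_one_eq_natCast {n : ℕ} [NeZero n] (k : ℕ) :
    k • (1 : Fin n) = (k : Fin n) := by
  induction k with
  | zero => simp
  | succ k ih => rw [succ_nsmul, ih, Nat.cast_succ]

theorem IsPrimitiveRoot.sum_fin_pow_mul_inv_pow {K : Type*} [Field K] {n : ℕ} {ω : K}
    (hω : IsPrimitiveRoot ω n) (i i' : Fin n) :
    ∑ c : Fin n, (ω ^ (i : ℕ) * (ω ^ (i' : ℕ))⁻¹) ^ (c : ℕ)
      = if i = i' then (n : K) else 0 := by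
  have hω0 : ω ≠ 0 := hω.ne_zero (Fin.pos i).ne'
  split_ifs with h
  · simp [h, mul_inv_cancel₀ (pow_ne_zero _ hω0)]
  set z := ω ^ (i : ℕ) * (ω ^ (i' : ℕ))⁻¹
  have hz1 : z ≠ 1 := fun hz =>
    h (Fin.ext (hω.pow_inj i.isLt i'.isLt ((mul_inv_eq_one₀ (pow_ne_zero _ hω0)).mp hz)))
  have hzn : z ^ n = 1 := by
    rw [mul_pow, inv_pow, ← pow_mul, ← pow_mul, pow_mul', pow_mul' ω, hω.pow_eq_one, one_pow,
      one_pow, inv_one, mul_one]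
  rw [Fin.sum_univ_eq_sum_range (z ^ ·), geom_sum_eq hz1, hzn, sub_self, zero_div]

def shiftMatrix (n : ℕ) [NeZero n] (R : Type*) [Zero R] [One R] : Matrix (Fin n) (Fin n) R :=
  (Equiv.addRight 1).permMatrix R

def clockMatrix {R : Type*} [Monoid R] [Zero R] (n : ℕ) (ω : R) : Matrix (Fin n) (Fin n) R :=
  diagonal fun a => ω ^ (a : ℕ)

section ClockShift

variable {n : ℕ} {R : Type*}

theorem shiftMatrix_apply [NeZero n] [Zero R] [One R] (x y : Fin n) :
    shiftMatrix n R x y = if (y : ℕ) = ((x : ℕ) + 1) % n then 1 else 0 := by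
  simp [shiftMatrix, PEquiv.toMatrix_apply, Fin.ext_iff, Fin.val_add, eq_comm]

theorem shiftMatrix_pow_val [NeZero n] [Semiring R] (j : Fin n) :
    shiftMatrix n R ^ (j : ℕ) = (Equiv.addRight j).permMatrix R := by
  rw [shiftMatrix, ← Equiv.Perm.permMatrix_pow, Equiv.nsmul_addRight, Fin.nsmul_one_eq_natCast,
    Fin.cast_val_eq_self]

theorem clockMatrix_pow_mul_conjTranspose_pow [Field R] [StarRing R] {ω : R}
    (hstar : star ω = ω⁻¹) (i i' : ℕ) :
    clockMatrix n ω ^ i * (clockMatrix n ω ^ i')ᴴ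
      = diagonal fun c : Fin n => (ω ^ i * (ω ^ i')⁻¹) ^ (c : ℕ) := by
  rw [clockMatrix, diagonal_pow, diagonal_pow, diagonal_conjTranspose, diagonal_mul_diagonal]
  congr 1
  ext c
  simp only [Pi.pow_apply, Pi.star_apply, star_pow, hstar, inv_pow, ← pow_mul, mul_pow]
  ring

theorem sum_shiftMatrix_pow_mul_clockMatrix_pow_mul_conjTranspose [NeZero n] [Field R]
    [StarRing R] {ω : R} (hω : IsPrimitiveRoot ω n) (hstar : star ω = ω⁻¹) (i i' : Fin n) :
    ∑ j : Fin n, shiftMatrix n R ^ (j : ℕ) * clockMatrix n ω ^ (i : ℕ)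
        * (shiftMatrix n R ^ (j : ℕ) * clockMatrix n ω ^ (i' : ℕ))ᴴ
      = if i = i' then (n : R) • 1 else 0 := by
  have hconj : ∀ j : Fin n, shiftMatrix n R ^ (j : ℕ) * clockMatrix n ω ^ (i : ℕ)
        * (shiftMatrix n R ^ (j : ℕ) * clockMatrix n ω ^ (i' : ℕ))ᴴ
      = (Equiv.addRight j).permMatrix R
          * diagonal (fun c : Fin n => (ω ^ (i : ℕ) * (ω ^ (i' : ℕ))⁻¹) ^ (c : ℕ))
          * ((Equiv.addRight j).permMatrix R)ᴴ := by
    intro j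
    rw [conjTranspose_mul, ← clockMatrix_pow_mul_conjTranspose_pow hstar, shiftMatrix_pow_val]
    simp only [Matrix.mul_assoc]
  simp only [hconj, Equiv.Perm.permMatrix_mul_diagonal_mul_conjTranspose,
    sum_diagonal_comp_addRight, hω.sum_fin_pow_mul_inv_pow, ite_smul, zero_smul]

end ClockShift

/-- Let `ω` be a primitive `n`-th root of unity, `D = diag(1, ω, …, ω^{n-1})`, and `C`
the cyclic shift permutation matrix. Then the `n² × n²` block matrix `U` whose
`(i,j)`-block is `C^j D^i / √n` is unitary. -/
theorem block_matrix_unitary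
    (n : ℕ) (hn : 0 < n) (ω : ℂ) (hω : IsPrimitiveRoot ω n)
    (C D : Matrix (Fin n) (Fin n) ℂ)
    (hC : ∀ x y : Fin n, C x y = if (y : ℕ) = ((x : ℕ) + 1) % n then 1 else 0)
    (hD : D = Matrix.diagonal fun a : Fin n => ω ^ (a : ℕ))
    (U : Matrix (Fin n × Fin n) (Fin n × Fin n) ℂ)
    (hU : ∀ p q : Fin n × Fin n,
      U p q = (C ^ (q.1 : ℕ) * D ^ (p.1 : ℕ)) p.2 q.2 / (Real.sqrt n : ℂ)) :
    U * Uᴴ = 1 := by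
  have : NeZero n := ⟨hn.ne'⟩
  have hstar : star ω = ω⁻¹ := (Complex.inv_eq_conj (hω.norm'_eq_one hn.ne')).symm
  have hCshift : C = shiftMatrix n ℂ :=
    ext fun x y => (hC x y).trans (shiftMatrix_apply x y).symm
  set B : Matrix (Fin n) (Fin n) (Matrix (Fin n) (Fin n) ℂ) :=
    of fun i j => shiftMatrix n ℂ ^ (j : ℕ) * clockMatrix n ω ^ (i : ℕ)
  set c : ℂ := (Real.sqrt n : ℂ)⁻¹ with hc
  have hUB : U = c • comp _ _ _ _ ℂ B := by
    ext p q
    rw [hU, Matrix.smul_apply, comp_apply, hCshift, hD, div_eq_inv_mul, smul_eq_mul]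
    rfl
  have hBB : B * Bᴴ = (n : ℂ) • 1 := by
    ext1 i i'
    simp only [mul_apply, conjTranspose_apply, star_eq_conjTranspose, B, of_apply]
    rw [sum_shiftMatrix_pow_mul_clockMatrix_pow_mul_conjTranspose hω hstar, Matrix.smul_apply,
      one_apply]
    split_ifs <;> simp
  have hscalar : c * star c * n = 1 := by
    rw [hc, star_inv₀, Complex.star_def, Complex.conj_ofReal, ← mul_inv, ← Complex.ofReal_mul,
      Real.mul_self_sqrt n.cast_nonneg, Complex.ofReal_natCast,
      inv_mul_cancel₀ (Nat.cast_ne_zero.mpr hn.ne')]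
  calc U * Uᴴ = (c * star c) • comp _ _ _ _ ℂ (B * Bᴴ) := by
        rw [hUB, conjTranspose_smul, Matrix.smul_mul, Matrix.mul_smul, smul_smul,
          comp_mul_conjTranspose_comp]
    _ = 1 := by
        rw [hBB, ← compLinearEquiv_apply _ _ _ _ ℂ ℂ, map_smul, compLinearEquiv_apply,
          comp_one, smul_smul, hscalar, one_smul]
end
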